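/- arXiv:1105.2271 — 4 statements merged into one kernel-verified Lean document; each statement's English description precedes it below -/
import Mathlib

section
/- Suppose the linear difference equation x_{m+1} = A_m x_m admits a nonuniform (μ,ν)-dichotomy with constants a < 0 ≤ b, ε ≥ 0, D ≥ 1, that the perturbations f_m satisfy f_m(0) = 0 and ‖f_m(u) − f_m(v)‖ ≤ c‖u − v‖(‖u‖ + ‖v‖)^q for some c > 0, q > 1, and that Σ_{k=1}^∞ μ_k^{aq} ν_k^ε converges; define β_m = μ_{m−1}^a / (ν_{m−1}^{ε(1+1/q)} (Σ_{k=m}^∞ μ_k^{aq} ν_k^ε)^{1/q}) and β̃_m = β_m ν_{m−1}^{−ε}, and assume there is K ≥ 1 with (μ_m^a β_m^{−1})/(μ_{n−1}^a β_n^{−1}) ≤ K for all m ≥ n ≥ 1. Fix C > D, let δ > 0 be sufficiently small, let φ ∈ 𝒳*_{δ,β}, and for each n ≥ 1 let x^φ_{n,·} ∈ ℬ_{n,δ,β} be the unique solution of x_m(ξ) = 𝒜_{m,n}ξ + Σ_{k=n}^{m−1} 𝒜_{m,k+1} P_{k+1} f_k(x_k(ξ) + φ_k(x_k(ξ))). If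 for every n ≥ 1 and every ξ ∈ B_n(δβ_n) one has φ_n(ξ) = −Σ_{k=n}^∞ 𝒜_{k+1,n}^{−1} Q_{k+1} f_k(x^φ_{n,k}(ξ) + φ_k(x^φ_{n,k}(ξ))), then for every n ≥ 1, every m ≥ n and every ξ ∈ B_n(δβ̃_n/(CK)) the identity φ_m(x^φ_{n,m}(ξ)) = 𝒜_{m,n} φ_n(ξ) + Σ_{k=n}^{m−1} 𝒜_{m,k+1} Q_{k+1} f_k(x^φ_{n,k}(ξ) + φ_k(x^φ_{n,k}(ξ))) holds. -/
/-!
Along the orbit `x_k = x^φ_{n,k}(ξ)`, which stays in the balls `B_k(δβ_k)` by the choice of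
the radius and the bound defining `K`, the solution started at time `k` from `x_k` continues
the same orbit, because the fixed-point equation determines a solution term by term. Hence the
hypothesis on `φ` reads
`φ_k(x_k) = -∑_{j ≥ k} 𝒜_{j+1,k}⁻¹ Q_{j+1} g_j` with the same `g_j = f_j(x_j + φ_j(x_j))` for
every `k`. This series converges absolutely by the dichotomy bound and the summability of
`μ_k^{aq} ν_k^ε`, so applying `A_k` and splitting off the first term gives
`φ_{k+1}(x_{k+1}) = A_k φ_k(x_k) + Q_{k+1} g_k`, and the variation of constants formula for
this recursion is the claim.
-/

open Real Filter Finset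

/-- A growth rate: an increasing sequence with `μ 0 ≥ 1` and `μ n → ∞`. -/
structure GrowthRate (μ : ℕ → ℝ) : Prop where
  mono : StrictMono μ
  one_le : 1 ≤ μ 0
  tendsto_atTop : Filter.Tendsto μ Filter.atTop Filter.atTop

/-- `calA A m n = A (m-1) ∘ ⋯ ∘ A n` (identity when `m ≤ n`). -/
def calA {X : Type*} [NormedAddCommGroup X] [NormedSpace ℝ X]
    (A : ℕ → X ≃L[ℝ] X) (m n : ℕ) : X →L[ℝ] X :=
  (List.range (m - n)).foldl
    (fun B k => ((A (n + k) : X →L[ℝ] X)).comp B) (ContinuousLinearMap.id ℝ X)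

/-- `calAinv A m n = (calA A m n)⁻¹ = A n⁻¹ ∘ ⋯ ∘ A (m-1)⁻¹`. -/
def calAinv {X : Type*} [NormedAddCommGroup X] [NormedSpace ℝ X]
    (A : ℕ → X ≃L[ℝ] X) (m n : ℕ) : X →L[ℝ] X :=
  (List.range (m - n)).foldl
    (fun B k => B.comp ((A (n + k)).symm : X →L[ℝ] X)) (ContinuousLinearMap.id ℝ X)

/-- The complementary projection `Q m = Id - P m`. -/
def Qproj {X : Type*} [NormedAddCommGroup X] [NormedSpace ℝ X]
    (P : ℕ → X →L[ℝ] X) (m : ℕ) : X →L[ℝ] X :=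
  ContinuousLinearMap.id ℝ X - P m

/-- The linear equation `x_{m+1} = A_m x_m` admits a nonuniform (μ,ν)-dichotomy with
projections `P`, and constants `a < 0 ≤ b`, `ε ≥ 0`, `D ≥ 1`. -/
structure Dichotomy {X : Type*} [NormedAddCommGroup X] [NormedSpace ℝ X]
    (A : ℕ → X ≃L[ℝ] X) (P : ℕ → X →L[ℝ] X)
    (μ ν : ℕ → ℝ) (a b ε D : ℝ) : Prop where
  ha : a < 0
  hb : 0 ≤ b
  hε : 0 ≤ ε
  hD : 1 ≤ D
  idem : ∀ m : ℕ, (P m).comp (P m) = P m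
  comm : ∀ m n : ℕ, n ≤ m → (P m).comp (calA A m n) = (calA A m n).comp (P n)
  boundP : ∀ m n : ℕ, 1 ≤ n → n ≤ m →
    ‖(calA A m n).comp (P n)‖ ≤ D * (μ m / μ (n - 1)) ^ a * ν (n - 1) ^ ε
  boundQ : ∀ m n : ℕ, 1 ≤ n → n ≤ m →
    ‖(calAinv A m n).comp (Qproj P m)‖ ≤ D * (μ (m - 1) / μ n) ^ (-b) * ν (m - 1) ^ ε

/-- The class 𝒫_{c,q} of admissible perturbations. -/
def IsPerturbation {X : Type*} [NormedAddCommGroup X] [NormedSpace ℝ X]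
    (f : ℕ → X → X) (c q : ℝ) : Prop :=
  ∀ n : ℕ, f n 0 = 0 ∧ ∀ u v : X, ‖f n u - f n v‖ ≤ c * ‖u - v‖ * (‖u‖ + ‖v‖) ^ q

/-- The sequence `β` of the stable manifold theorem. -/
noncomputable def betaSeq (μ ν : ℕ → ℝ) (a ε q : ℝ) (m : ℕ) : ℝ :=
  μ (m - 1) ^ a /
    (ν (m - 1) ^ (ε * (1 + 1 / q)) *
      (∑' k : {k : ℕ // m ≤ k}, μ k.1 ^ (a * q) * ν k.1 ^ ε) ^ (1 / q))

/-- Membership in 𝒳_{δ,β}: a sequence of continuous maps `φ n : B_n(δ β_n) → F_n`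
vanishing at `0` and Lipschitz with constant `1`.  (Here `E n` is the range of `P n`,
identified with the fixed-point set of `P n`, and `F n = ker (P n)`.) -/
def MemX {X : Type*} [NormedAddCommGroup X] [NormedSpace ℝ X]
    (P : ℕ → X →L[ℝ] X) (δ : ℝ) (β : ℕ → ℝ) (φ : ℕ → X → X) : Prop :=
  ∀ n : ℕ, 1 ≤ n →
    φ n 0 = 0 ∧
    (∀ ξ : X, P n ξ = ξ → ‖ξ‖ < δ * β n → P n (φ n ξ) = 0) ∧
    (∀ ξ ξ' : X, P n ξ = ξ → P n ξ' = ξ' → ‖ξ‖ < δ * β n → ‖ξ'‖ < δ * β n →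
      ‖φ n ξ - φ n ξ'‖ ≤ ‖ξ - ξ'‖) ∧
    ContinuousOn (φ n) {ξ : X | P n ξ = ξ ∧ ‖ξ‖ < δ * β n}

/-- Membership in 𝒳*_{δ,β}: maps `φ n : E n → F n` restricting on the balls to an element
of 𝒳_{δ,β} and radially extended outside the balls. -/
def MemXstar {X : Type*} [NormedAddCommGroup X] [NormedSpace ℝ X]
    (P : ℕ → X →L[ℝ] X) (δ : ℝ) (β : ℕ → ℝ) (φ : ℕ → X → X) : Prop :=
  MemX P δ β φ ∧
    ∀ n : ℕ, 1 ≤ n → ∀ ξ : X, P n ξ = ξ →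
      P n (φ n ξ) = 0 ∧ (¬ ‖ξ‖ < δ * β n → φ n ξ = φ n ((δ * β n / ‖ξ‖) • ξ))

/-- Membership in ℬ_{n,δ,β}. -/
def MemB {X : Type*} [NormedAddCommGroup X] [NormedSpace ℝ X]
    (P : ℕ → X →L[ℝ] X) (μ ν : ℕ → ℝ) (a ε C δ : ℝ) (β : ℕ → ℝ)
    (n : ℕ) (x : ℕ → X → X) : Prop :=
  (∀ ξ : X, P n ξ = ξ → ‖ξ‖ < δ * β n → x n ξ = ξ) ∧
  (∀ m : ℕ, n ≤ m → x m 0 = 0) ∧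
  (∀ m : ℕ, n ≤ m → ∀ ξ : X, P n ξ = ξ → ‖ξ‖ < δ * β n → P m (x m ξ) = x m ξ) ∧
  (∀ m : ℕ, n ≤ m → ∀ ξ ξ' : X, P n ξ = ξ → P n ξ' = ξ' →
    ‖ξ‖ < δ * β n → ‖ξ'‖ < δ * β n →
    ‖x m ξ - x m ξ'‖ ≤ C * (μ m / μ (n - 1)) ^ a * ν (n - 1) ^ ε * ‖ξ - ξ'‖)

/-- The metric `‖φ − ψ‖′` on 𝒳_{δ,β}. -/
noncomputable def distX {X : Type*} [NormedAddCommGroup X] [NormedSpace ℝ X]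
    (P : ℕ → X →L[ℝ] X) (δ : ℝ) (β : ℕ → ℝ) (φ ψ : ℕ → X → X) : ℝ :=
  sSup {r : ℝ | ∃ n : ℕ, 1 ≤ n ∧ ∃ ξ : X, P n ξ = ξ ∧ ‖ξ‖ < δ * β n ∧ ξ ≠ 0 ∧
    r = ‖φ n ξ - ψ n ξ‖ / ‖ξ‖}

/-- The metric `‖x − y‖″` on ℬ_{n,δ,β}. -/
noncomputable def distB {X : Type*} [NormedAddCommGroup X] [NormedSpace ℝ X]
    (P : ℕ → X →L[ℝ] X) (μ ν : ℕ → ℝ) (a ε δ : ℝ) (β : ℕ → ℝ)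
    (n : ℕ) (x y : ℕ → X → X) : ℝ :=
  sSup {r : ℝ | ∃ m : ℕ, n ≤ m ∧ ∃ ξ : X, P n ξ = ξ ∧ ‖ξ‖ < δ * β n ∧ ξ ≠ 0 ∧
    r = ‖x m ξ - y m ξ‖ / ‖ξ‖ * (μ m / μ (n - 1)) ^ (-a) * ν (n - 1) ^ (-ε)}

/-- `x` solves the fixed point equation (eq:dyn-split2a) for `φ` at base time `n`:
`x m ξ = 𝒜_{m,n} ξ + ∑_{k=n}^{m-1} 𝒜_{m,k+1} P_{k+1} f_k (x_k ξ + φ_k (x_k ξ))`. -/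
def SolvesEq {X : Type*} [NormedAddCommGroup X] [NormedSpace ℝ X]
    (A : ℕ → X ≃L[ℝ] X) (P : ℕ → X →L[ℝ] X) (f : ℕ → X → X)
    (δ : ℝ) (β : ℕ → ℝ) (n : ℕ) (φ : ℕ → X → X) (x : ℕ → X → X) : Prop :=
  ∀ m : ℕ, n ≤ m → ∀ ξ : X, P n ξ = ξ → ‖ξ‖ < δ * β n →
    x m ξ = calA A m n ξ +
      ∑ k ∈ Finset.Ico n m, calA A m (k + 1) (P (k + 1) (f k (x k ξ + φ k (x k ξ))))

/-- The perturbed dynamics `ℱ_{m,n} = (A_{m-1} + f_{m-1}) ∘ ⋯ ∘ (A_n + f_n)`. -/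
def calF {X : Type*} [NormedAddCommGroup X] [NormedSpace ℝ X]
    (A : ℕ → X ≃L[ℝ] X) (f : ℕ → X → X) (m n : ℕ) : X → X :=
  (List.range (m - n)).foldl
    (fun g k => (fun y : X => A (n + k) y + f (n + k) y) ∘ g) id

/-- The metric `‖f − g‖‴` on 𝒫_{c,q}. -/
noncomputable def distP {X : Type*} [NormedAddCommGroup X] [NormedSpace ℝ X]
    (f g : ℕ → X → X) (q : ℝ) : ℝ :=
  sSup {r : ℝ | ∃ n : ℕ, 1 ≤ n ∧ ∃ u : X, u ≠ 0 ∧ r = ‖f n u - g n u‖ / ‖u‖ ^ (q + 1)}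

lemma eq_of_eq_add_sum_Ico {M : Type*} [AddCommMonoid M] {u v c : ℕ → M}
    {G : ℕ → ℕ → M → M} {n : ℕ}
    (hu : ∀ k, n ≤ k → u k = c k + ∑ j ∈ Finset.Ico n k, G k j (u j))
    (hv : ∀ k, n ≤ k → v k = c k + ∑ j ∈ Finset.Ico n k, G k j (v j)) :
    ∀ k, n ≤ k → u k = v k := by
  intro k
  induction k using Nat.strong_induction_on with
  | _ k ih =>
    intro hk
    rw [hu k hk, hv k hk]
    congr 1
    refine Finset.sum_congr rfl fun j hj => ?_
    rw [ih j (Finset.mem_Ico.mp hj).2 (Finset.mem_Ico.mp hj).1]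

lemma lt_of_lt_mul_rpow_neg_div {r δ β t ε C K : ℝ} (hδβ : 0 < δ * β) (ht : 1 ≤ t)
    (hε : 0 ≤ ε) (hCK : 1 ≤ C * K) (h : r < δ * (β * t ^ (-ε)) / (C * K)) : r < δ * β := by
  have htε : t ^ (-ε) ≤ 1 := Real.rpow_le_one_of_one_le_of_nonpos ht (neg_nonpos.mpr hε)
  have htε0 : 0 ≤ t ^ (-ε) := Real.rpow_nonneg (by linarith) _
  calc r < δ * (β * t ^ (-ε)) / (C * K) := h
    _ ≤ δ * (β * t ^ (-ε)) := div_le_self (by rw [← mul_assoc]; positivity) hCK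
    _ ≤ δ * β := by rw [← mul_assoc]; exact mul_le_of_le_one_right hδβ.le htε

lemma rpow_div_mul_le_of_div_le {s t β β' a K : ℝ} (hs : 0 < s) (ht : 0 < t) (hβ : 0 < β)
    (hβ' : 0 < β') (h : s ^ a * β'⁻¹ / (t ^ a * β⁻¹) ≤ K) : (s / t) ^ a * β ≤ K * β' := by
  have hta : 0 < t ^ a := Real.rpow_pos_of_pos ht a
  rwa [show s ^ a * β'⁻¹ / (t ^ a * β⁻¹) = (s / t) ^ a * β / β' by
    rw [Real.div_rpow hs.le ht.le]; field_simp, div_le_iff₀ hβ'] at h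

section Evolution

variable {X : Type*} [NormedAddCommGroup X] [NormedSpace ℝ X] (A : ℕ → X ≃L[ℝ] X)

lemma calA_self (n : ℕ) : calA A n n = ContinuousLinearMap.id ℝ X := by
  simp [calA]

lemma calA_succ {m n : ℕ} (h : n ≤ m) :
    calA A (m + 1) n = (A m : X →L[ℝ] X).comp (calA A m n) := by
  rw [calA, calA, show m + 1 - n = m - n + 1 by omega, List.range_succ, List.foldl_append,
    List.foldl_cons, List.foldl_nil, Nat.add_sub_of_le h]

lemma calA_comp {n m k : ℕ} (hnm : n ≤ m) (hmk : m ≤ k) :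
    (calA A k m).comp (calA A m n) = calA A k n := by
  induction k, hmk using Nat.le_induction with
  | base => rw [calA_self, ContinuousLinearMap.id_comp]
  | succ k hk ih =>
    rw [calA_succ A hk, calA_succ A (hnm.trans hk), ContinuousLinearMap.comp_assoc, ih]

lemma calAinv_self (n : ℕ) : calAinv A n n = ContinuousLinearMap.id ℝ X := by
  simp [calAinv]

lemma calAinv_succ {m n : ℕ} (h : n ≤ m) :
    calAinv A (m + 1) n = (calAinv A m n).comp ((A m).symm : X →L[ℝ] X) := by
  rw [calAinv, calAinv, show m + 1 - n = m - n + 1 by omega, List.range_succ, List.foldl_append,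
    List.foldl_cons, List.foldl_nil, Nat.add_sub_of_le h]

lemma apply_calAinv {n m : ℕ} (h : n < m) (y : X) :
    A n (calAinv A m n y) = calAinv A m (n + 1) y := by
  induction m, h using Nat.le_induction generalizing y with
  | base => simp [calAinv_succ A le_rfl, calAinv_self]
  | succ m hm ih =>
    rw [calAinv_succ A (by omega), calAinv_succ A hm]
    exact ih _

lemma eq_calA_add_sum_of_succ {z g : ℕ → X} {n : ℕ}
    (hz : ∀ m, n ≤ m → z (m + 1) = A m (z m) + g m) {m : ℕ} (hm : n ≤ m) :
    z m = calA A m n (z n) + ∑ k ∈ Finset.Ico n m, calA A m (k + 1) (g k) := by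
  induction m, hm using Nat.le_induction with
  | base => simp [calA_self]
  | succ m hm ih =>
    have hsum : ∑ k ∈ Finset.Ico n m, calA A (m + 1) (k + 1) (g k) =
        A m (∑ k ∈ Finset.Ico n m, calA A m (k + 1) (g k)) := by
      rw [map_sum]
      exact Finset.sum_congr rfl fun k hk => by rw [calA_succ A (Finset.mem_Ico.mp hk).2]; rfl
    rw [hz m hm, ih, Finset.sum_Ico_succ_top hm, hsum, calA_succ A hm, calA_self, map_add,
      add_assoc]
    rfl

lemma neg_tsum_calAinv_succ (g : ℕ → X) (m : ℕ)
    (hg : Summable fun j => calAinv A (m + j + 1) m (g (m + j))) :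
    -∑' j, calAinv A (m + 1 + j + 1) (m + 1) (g (m + 1 + j)) =
      A m (-∑' j, calAinv A (m + j + 1) m (g (m + j))) + g m := by
  have hA : ∀ j, A m (calAinv A (m + j + 1) m (g (m + j))) =
      calAinv A (m + j + 1) (m + 1) (g (m + j)) := fun j => apply_calAinv A (by omega) _
  have hg' : Summable fun j => calAinv A (m + j + 1) (m + 1) (g (m + j)) :=
    (hg.mapL (A m : X →L[ℝ] X)).congr hA
  rw [map_neg, ContinuousLinearEquiv.map_tsum, tsum_congr hA, hg'.tsum_eq_zero_add]
  simp only [add_zero, calAinv_self, ContinuousLinearMap.id_apply, ← add_assoc,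
    Nat.add_right_comm m 1]
  abel

end Evolution

section GrowthRates

variable {μ ν : ℕ → ℝ}

lemma GrowthRate.one_le_apply (hμ : GrowthRate μ) (k : ℕ) : 1 ≤ μ k :=
  hμ.one_le.trans (hμ.mono.monotone k.zero_le)

lemma GrowthRate.pos (hμ : GrowthRate μ) (k : ℕ) : 0 < μ k :=
  one_pos.trans_le (hμ.one_le_apply k)

lemma betaSeq_pos {a ε q : ℝ} (hμ : GrowthRate μ) (hν : GrowthRate ν)
    (hsum : Summable fun k => μ k ^ (a * q) * ν k ^ ε) (m : ℕ) : 0 < betaSeq μ ν a ε q m := by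
  have hterm : ∀ k, 0 < μ k ^ (a * q) * ν k ^ ε := fun k =>
    mul_pos (Real.rpow_pos_of_pos (hμ.pos k) _) (Real.rpow_pos_of_pos (hν.pos k) _)
  have htail : 0 < ∑' k : {k : ℕ // m ≤ k}, μ k.1 ^ (a * q) * ν k.1 ^ ε :=
    (hsum.subtype _).tsum_pos (fun k => (hterm k.1).le) ⟨m, le_rfl⟩ (hterm m)
  unfold betaSeq
  have := Real.rpow_pos_of_pos (hμ.pos (m - 1)) a
  have := Real.rpow_pos_of_pos (hν.pos (m - 1)) (ε * (1 + 1 / q))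
  have := Real.rpow_pos_of_pos htail (1 / q)
  positivity

end GrowthRates

section Dichotomies

variable {X : Type*} [NormedAddCommGroup X] [NormedSpace ℝ X] {A : ℕ → X ≃L[ℝ] X}
  {P : ℕ → X →L[ℝ] X} {μ ν : ℕ → ℝ} {a b ε D c q : ℝ} {f : ℕ → X → X}

lemma IsPerturbation.norm_apply_le (hf : IsPerturbation f c q) (n : ℕ) (u : X) :
    ‖f n u‖ ≤ c * ‖u‖ * ‖u‖ ^ q := by
  simpa [(hf n).1] using (hf n).2 u 0

lemma Dichotomy.norm_calAinv_Qproj_le (hdich : Dichotomy A P μ ν a b ε D)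
    (hμ : GrowthRate μ) (hν : GrowthRate ν) {n k : ℕ} (hn : 1 ≤ n) (hk : n ≤ k) (y : X) :
    ‖calAinv A (k + 1) n (Qproj P (k + 1) y)‖ ≤ D * ν k ^ ε * ‖y‖ := by
  have hbound := hdich.boundQ (k + 1) n hn (by omega)
  rw [Nat.add_sub_cancel] at hbound
  have hμ_ratio : (μ k / μ n) ^ (-b) ≤ 1 :=
    Real.rpow_le_one_of_one_le_of_nonpos
      ((one_le_div (hμ.pos n)).mpr (hμ.mono.monotone hk)) (neg_nonpos.mpr hdich.hb)
  have hνε : 0 ≤ ν k ^ ε := Real.rpow_nonneg (hν.pos k).le ε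
  have hD : 0 ≤ D := zero_le_one.trans hdich.hD
  calc ‖calAinv A (k + 1) n (Qproj P (k + 1) y)‖
      ≤ ‖(calAinv A (k + 1) n).comp (Qproj P (k + 1))‖ * ‖y‖ :=
        ((calAinv A (k + 1) n).comp (Qproj P (k + 1))).le_opNorm y
    _ ≤ D * (μ k / μ n) ^ (-b) * ν k ^ ε * ‖y‖ := by gcongr
    _ ≤ D * 1 * ν k ^ ε * ‖y‖ := by gcongr
    _ = D * ν k ^ ε * ‖y‖ := by rw [mul_one]

lemma Dichotomy.summable_calAinv_Qproj [CompleteSpace X] (hdich : Dichotomy A P μ ν a b ε D)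
    (hμ : GrowthRate μ) (hν : GrowthRate ν) (hc : 0 ≤ c) (hq : 0 ≤ q)
    (hf : IsPerturbation f c q) (hsum : Summable fun k => μ k ^ (a * q) * ν k ^ ε)
    {n : ℕ} (hn : 1 ≤ n) {u : ℕ → X} {R : ℝ} (hu : ∀ k, n ≤ k → ‖u k‖ ≤ R * μ k ^ a) :
    Summable fun j => calAinv A (n + j + 1) n (Qproj P (n + j + 1) (f (n + j) (u (n + j)))) := by
  have hR : 0 ≤ R := nonneg_of_mul_nonneg_left ((norm_nonneg _).trans (hu n le_rfl))
    (Real.rpow_pos_of_pos (hμ.pos n) a)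
  refine Summable.of_norm_bounded
    ((hsum.comp_injective (add_right_injective n)).mul_left (D * c * R * R ^ q)) fun j => ?_
  have hk : n ≤ n + j := Nat.le_add_right n j
  set k := n + j
  have hμa : 0 ≤ μ k ^ a := Real.rpow_nonneg (hμ.pos k).le a
  have hu_le : ‖u k‖ ≤ R :=
    (hu k hk).trans (mul_le_of_le_one_right hR
      (Real.rpow_le_one_of_one_le_of_nonpos (hμ.one_le_apply k) hdich.ha.le))
  have hu_pow : ‖u k‖ ^ q ≤ R ^ q * μ k ^ (a * q) := by
    calc ‖u k‖ ^ q ≤ (R * μ k ^ a) ^ q := Real.rpow_le_rpow (norm_nonneg _) (hu k hk) hq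
      _ = R ^ q * μ k ^ (a * q) := by rw [Real.mul_rpow hR hμa, ← Real.rpow_mul (hμ.pos k).le]
  have hDν : 0 ≤ D * ν k ^ ε :=
    mul_nonneg (zero_le_one.trans hdich.hD) (Real.rpow_nonneg (hν.pos k).le ε)
  calc ‖calAinv A (k + 1) n (Qproj P (k + 1) (f k (u k)))‖
      ≤ D * ν k ^ ε * ‖f k (u k)‖ := hdich.norm_calAinv_Qproj_le hμ hν hn hk _
    _ ≤ D * ν k ^ ε * (c * R * (R ^ q * μ k ^ (a * q))) := by
        gcongr
        exact (hf.norm_apply_le k _).trans (by gcongr)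
    _ = D * c * R * R ^ q * (μ k ^ (a * q) * ν k ^ ε) := by ring

end Dichotomies

section Solutions

variable {X : Type*} [NormedAddCommGroup X] [NormedSpace ℝ X] {A : ℕ → X ≃L[ℝ] X}
  {P : ℕ → X →L[ℝ] X} {μ ν : ℕ → ℝ} {a ε C K δ : ℝ} {β : ℕ → ℝ} {f : ℕ → X → X}
  {φ : ℕ → X → X} {x y : ℕ → X → X} {n : ℕ} {ξ : X}

lemma MemX.norm_apply_le (hφ : MemX P δ β φ) (hn : 1 ≤ n) (hδβ : 0 < δ * β n)
    (hPξ : P n ξ = ξ) (hξ : ‖ξ‖ < δ * β n) : ‖φ n ξ‖ ≤ ‖ξ‖ := by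
  obtain ⟨hφ0, -, hlip, -⟩ := hφ n hn
  simpa [hφ0] using hlip ξ 0 hPξ (map_zero _) hξ (by rwa [norm_zero])

lemma MemB.norm_apply_le (hx : MemB P μ ν a ε C δ β n x) (hδβ : 0 < δ * β n)
    (hPξ : P n ξ = ξ) (hξ : ‖ξ‖ < δ * β n) {m : ℕ} (hm : n ≤ m) :
    ‖x m ξ‖ ≤ C * (μ m / μ (n - 1)) ^ a * ν (n - 1) ^ ε * ‖ξ‖ := by
  simpa [hx.2.1 m hm] using hx.2.2.2 m hm ξ 0 hPξ (map_zero _) hξ (by rwa [norm_zero])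

lemma MemB.norm_apply_lt (hx : MemB P μ ν a ε C δ β n x) (hμ : GrowthRate μ)
    (hν : GrowthRate ν) (hC : 0 < C) (hK : 0 < K) (hδ : 0 ≤ δ) (hδβ : 0 < δ * β n)
    (hβK : ∀ m, n ≤ m → (μ m / μ (n - 1)) ^ a * β n ≤ K * β m) (hPξ : P n ξ = ξ)
    (hξβ : ‖ξ‖ < δ * β n) (hξ : ‖ξ‖ < δ * (β n * ν (n - 1) ^ (-ε)) / (C * K))
    {m : ℕ} (hm : n ≤ m) : ‖x m ξ‖ < δ * β m := by
  have hνε : 0 < ν (n - 1) ^ ε := Real.rpow_pos_of_pos (hν.pos _) ε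
  have hL : 0 < C * (μ m / μ (n - 1)) ^ a * ν (n - 1) ^ ε := by
    have := Real.rpow_pos_of_pos (div_pos (hμ.pos m) (hμ.pos (n - 1))) a
    positivity
  calc ‖x m ξ‖ ≤ C * (μ m / μ (n - 1)) ^ a * ν (n - 1) ^ ε * ‖ξ‖ :=
        hx.norm_apply_le hδβ hPξ hξβ hm
    _ < C * (μ m / μ (n - 1)) ^ a * ν (n - 1) ^ ε * (δ * (β n * ν (n - 1) ^ (-ε)) / (C * K)) :=
        mul_lt_mul_of_pos_left hξ hL
    _ = δ * ((μ m / μ (n - 1)) ^ a * β n) / K := by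
        rw [Real.rpow_neg (hν.pos _).le]
        field_simp
    _ ≤ δ * β m := by
        rw [div_le_iff₀ hK, mul_assoc, mul_comm (β m)]
        exact mul_le_mul_of_nonneg_left (hβK m hm) hδ

lemma MemB.norm_add_apply_le (hx : MemB P μ ν a ε C δ β n x) (hφ : MemX P δ β φ)
    (hμ : GrowthRate μ) (hn : 1 ≤ n) (hδβ : ∀ k, 0 < δ * β k) (hPξ : P n ξ = ξ)
    (hξ : ‖ξ‖ < δ * β n) (horbit : ∀ k, n ≤ k → ‖x k ξ‖ < δ * β k) {k : ℕ} (hk : n ≤ k) :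
    ‖x k ξ + φ k (x k ξ)‖ ≤ 2 * C * ν (n - 1) ^ ε * ‖ξ‖ / μ (n - 1) ^ a * μ k ^ a := by
  have hφx := hφ.norm_apply_le (hn.trans hk) (hδβ k) (hx.2.2.1 k hk ξ hPξ hξ) (horbit k hk)
  have hxk := hx.norm_apply_le (hδβ n) hPξ hξ hk
  rw [Real.div_rpow (hμ.pos k).le (hμ.pos (n - 1)).le] at hxk
  calc ‖x k ξ + φ k (x k ξ)‖ ≤ ‖x k ξ‖ + ‖φ k (x k ξ)‖ := norm_add_le _ _
    _ ≤ 2 * ‖x k ξ‖ := by linarith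
    _ ≤ 2 * (C * (μ k ^ a / μ (n - 1) ^ a) * ν (n - 1) ^ ε * ‖ξ‖) := by linarith
    _ = 2 * C * ν (n - 1) ^ ε * ‖ξ‖ / μ (n - 1) ^ a * μ k ^ a := by ring

lemma SolvesEq.eq_calA_add_sum_Ico (hx : SolvesEq A P f δ β n φ x) (hPξ : P n ξ = ξ)
    (hξ : ‖ξ‖ < δ * β n) {m k : ℕ} (hnm : n ≤ m) (hmk : m ≤ k) :
    x k ξ = calA A k m (x m ξ) +
      ∑ j ∈ Finset.Ico m k, calA A k (j + 1) (P (j + 1) (f j (x j ξ + φ j (x j ξ)))) := by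
  have hcomp : ∀ r, r ≤ m → ∀ v : X, calA A k m (calA A m r v) = calA A k r v := fun r hr v =>
    DFunLike.congr_fun (calA_comp A hr hmk) v
  rw [hx k (hnm.trans hmk) ξ hPξ hξ, hx m hnm ξ hPξ hξ, map_add, map_sum, hcomp n hnm,
    Finset.sum_congr rfl fun j hj => hcomp (j + 1) (Finset.mem_Ico.mp hj).2 _, add_assoc,
    Finset.sum_Ico_consecutive _ hnm hmk]

lemma SolvesEq.apply_apply_eq (hx : SolvesEq A P f δ β n φ x) (hy : SolvesEq A P f δ β m φ y)
    (hnm : n ≤ m) (hPξ : P n ξ = ξ) (hξ : ‖ξ‖ < δ * β n) (hPx : P m (x m ξ) = x m ξ)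
    (hxm : ‖x m ξ‖ < δ * β m) {k : ℕ} (hk : m ≤ k) : y k (x m ξ) = x k ξ :=
  eq_of_eq_add_sum_Ico (u := fun k => y k (x m ξ)) (v := fun k => x k ξ)
    (G := fun k j z => calA A k (j + 1) (P (j + 1) (f j (z + φ j z))))
    (fun k hk => hy k hk _ hPx hxm)
    (fun _ hk => hx.eq_calA_add_sum_Ico hPξ hξ hnm hk) k hk

end Solutions

/-- Lemma 2, part 2, of the paper. -/
theorem invariance_of_phi_eq_neg_series
    {X : Type*} [NormedAddCommGroup X] [NormedSpace ℝ X] [CompleteSpace X]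
    (A : ℕ → X ≃L[ℝ] X) (P : ℕ → X →L[ℝ] X) (μ ν : ℕ → ℝ)
    (a b ε D c q C K : ℝ) (f : ℕ → X → X)
    (hμ : GrowthRate μ) (hν : GrowthRate ν)
    (hdich : Dichotomy A P μ ν a b ε D)
    (hc : 0 < c) (hq : 1 < q) (hf : IsPerturbation f c q)
    (hsum : Summable (fun k : ℕ => μ k ^ (a * q) * ν k ^ ε))
    (hK : 1 ≤ K)
    (hdec : ∀ m n : ℕ, 1 ≤ n → n ≤ m →
      μ m ^ a * (betaSeq μ ν a ε q m)⁻¹ / (μ (n - 1) ^ a * (betaSeq μ ν a ε q n)⁻¹) ≤ K)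
    (hC : D < C) :
    ∃ δ₀ : ℝ, 0 < δ₀ ∧ ∀ δ : ℝ, 0 < δ → δ ≤ δ₀ →
      ∀ φ : ℕ → X → X, MemXstar P δ (betaSeq μ ν a ε q) φ →
      ∀ x : ℕ → ℕ → X → X,
        (∀ n : ℕ, 1 ≤ n → MemB P μ ν a ε C δ (betaSeq μ ν a ε q) n (x n) ∧
          SolvesEq A P f δ (betaSeq μ ν a ε q) n φ (x n) ∧
          (∀ y : ℕ → X → X, MemB P μ ν a ε C δ (betaSeq μ ν a ε q) n y →
            SolvesEq A P f δ (betaSeq μ ν a ε q) n φ y →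
            ∀ m : ℕ, n ≤ m → ∀ ξ : X, P n ξ = ξ → ‖ξ‖ < δ * betaSeq μ ν a ε q n →
              y m ξ = x n m ξ)) →
        (∀ n : ℕ, 1 ≤ n → ∀ ξ : X, P n ξ = ξ → ‖ξ‖ < δ * betaSeq μ ν a ε q n →
          φ n ξ = -∑' j : ℕ,
            calAinv A (n + j + 1) n
              (Qproj P (n + j + 1)
                (f (n + j) (x n (n + j) ξ + φ (n + j) (x n (n + j) ξ))))) →
        ∀ n : ℕ, 1 ≤ n → ∀ m : ℕ, n ≤ m → ∀ ξ : X, P n ξ = ξ →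
          ‖ξ‖ < δ * (betaSeq μ ν a ε q n * ν (n - 1) ^ (-ε)) / (C * K) →
          φ m (x n m ξ) = calA A m n (φ n ξ) +
            ∑ k ∈ Finset.Ico n m,
              calA A m (k + 1) (Qproj P (k + 1) (f k (x n k ξ + φ k (x n k ξ)))) := by
  have hβ : ∀ k, 0 < betaSeq μ ν a ε q k := betaSeq_pos hμ hν hsum
  have hC0 : 0 < C := by linarith [hdich.hD]
  refine ⟨1, one_pos, fun δ hδ _ φ hφ x hx hphi n hn m hm ξ hPξ hξ => ?_⟩
  have hδβ : ∀ k, 0 < δ * betaSeq μ ν a ε q k := fun k => mul_pos hδ (hβ k)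
  have hξβ : ‖ξ‖ < δ * betaSeq μ ν a ε q n := lt_of_lt_mul_rpow_neg_div (hδβ n)
    (hν.one_le_apply _) hdich.hε (by nlinarith [hdich.hD]) hξ
  obtain ⟨hxB, hxsol, -⟩ := hx n hn
  have horbit : ∀ k, n ≤ k → ‖x n k ξ‖ < δ * betaSeq μ ν a ε q k :=
    fun k hk => hxB.norm_apply_lt hμ hν hC0 (by linarith) hδ.le (hδβ n)
      (fun m hm => rpow_div_mul_le_of_div_le (hμ.pos m) (hμ.pos _) (hβ n) (hβ m) (hdec m n hn hm))
      hPξ hξβ hξ hk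
  have hPx : ∀ k, n ≤ k → P k (x n k ξ) = x n k ξ := fun k hk => hxB.2.2.1 k hk ξ hPξ hξβ
  have hflow : ∀ k, n ≤ k → ∀ j, x k (k + j) (x n k ξ) = x n (k + j) ξ := fun k hk j =>
    hxsol.apply_apply_eq (hx k (hn.trans hk)).2.1 hk hPξ hξβ (hPx k hk) (horbit k hk)
      (Nat.le_add_right k j)
  have hvar := eq_calA_add_sum_of_succ A (z := fun k => φ k (x n k ξ))
    (g := fun k => Qproj P (k + 1) (f k (x n k ξ + φ k (x n k ξ)))) (fun k hk => ?_) hm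
  · simpa only [hxB.1 ξ hPξ hξβ] using hvar
  have hsummable := hdich.summable_calAinv_Qproj hμ hν hc.le (by linarith) hf hsum
    (u := fun i => x n i ξ + φ i (x n i ξ)) (hn.trans hk) fun i hi =>
      hxB.norm_add_apply_le hφ.1 hμ hn hδβ hPξ hξβ horbit (hk.trans hi)
  have hφk := hphi k (hn.trans hk) _ (hPx k hk) (horbit k hk)
  have hφk1 := hphi (k + 1) (by omega) _ (hPx (k + 1) (by omega)) (horbit (k + 1) (by omega))
  simp only [hflow k hk, hflow (k + 1) (by omega)] at hφk hφk1
  have hstep := neg_tsum_calAinv_succ A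
    (fun i => Qproj P (i + 1) (f i (x n i ξ + φ i (x n i ξ)))) k hsummable
  beta_reduce at hstep
  rwa [← hφk1, ← hφk] at hstep
end

section
/- Let μ, ν be growth rates, a < 0 ≤ b, ε ≥ 0, and for n ≥ 1 define r_n = (μ_{n+1}/μ_n)^b · (ν_n^{(−1)^n − 1} / ν_{n−1}^{(−1)^{n−1} − 1})^{ε/2}. Assume there is λ > 0 with μ_{m}/μ_{m−1} ≤ λ for all m ≥ 1. Then for every even m and every odd n with m ≥ n ≥ 1 one has λ^{−b} (μ_{m−1}/μ_n)^{−b} ν_{m−1}^ε ≤ ∏_{k=n}^{m−1} r_k^{−1} ≤ (μ_{m−1}/μ_n)^{−b} ν_{m−1}^ε; in particular, the factor ν_{m−1}^ε in the nonuniform part of the dichotomy of the diagonal system diag(p_n, r_n) cannot be removed when ε > 0 and ν is unbounded. -/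
open Real Filter Finset

/-- The second diagonal entry of the operators `A_n` of Example 1. -/
noncomputable def rcoef (μ ν : ℕ → ℝ) (b ε : ℝ) (n : ℕ) : ℝ :=
  (μ (n + 1) / μ n) ^ b *
    (ν n ^ ((-1 : ℝ) ^ n - 1) / ν (n - 1) ^ ((-1 : ℝ) ^ (n - 1) - 1)) ^ (ε / 2)

/-- in Example 1, if `μ_m/μ_{m-1} ≤ λ` then for `m` even and `n` odd,
`λ^{-b} (μ_{m-1}/μ_n)^{-b} ν_{m-1}^ε ≤ ∏_{k=n}^{m-1} r_k⁻¹ ≤ (μ_{m-1}/μ_n)^{-b} ν_{m-1}^ε`,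
showing that the nonuniform part of the dichotomy cannot be removed. -/
theorem example_nonuniform_part_optimal (μ ν : ℕ → ℝ) (a b ε lam : ℝ)
    (hμ : GrowthRate μ) (hν : GrowthRate ν)
    (ha : a < 0) (hb : 0 ≤ b) (hε : 0 ≤ ε)
    (hlam : 0 < lam) (hbound : ∀ m : ℕ, 1 ≤ m → μ m / μ (m - 1) ≤ lam) :
    ∀ m n : ℕ, 1 ≤ n → n ≤ m → Even m → Odd n →
      lam ^ (-b) * (μ (m - 1) / μ n) ^ (-b) * ν (m - 1) ^ ε ≤
        (∏ k ∈ Finset.Ico n m, (rcoef μ ν b ε k)⁻¹) ∧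
      (∏ k ∈ Finset.Ico n m, (rcoef μ ν b ε k)⁻¹) ≤
        (μ (m - 1) / μ n) ^ (-b) * ν (m - 1) ^ ε := by
  intro m n hn hnm hme hno
  have μpos : ∀ k, (0:ℝ) < μ k := fun k =>
    lt_of_lt_of_le one_pos (le_trans hμ.one_le (hμ.mono.monotone (Nat.zero_le k)))
  have νpos : ∀ k, (0:ℝ) < ν k := fun k =>
    lt_of_lt_of_le one_pos (le_trans hν.one_le (hν.mono.monotone (Nat.zero_le k)))
  set G : ℕ → ℝ := fun k => μ k ^ b * (ν (k-1) ^ ((-1:ℝ)^(k-1) - 1)) ^ (ε/2) with hG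
  have Gpos : ∀ k, 0 < G k := fun k =>
    mul_pos (Real.rpow_pos_of_pos (μpos k) _)
      (Real.rpow_pos_of_pos (Real.rpow_pos_of_pos (νpos (k-1)) _) _)
  have key : ∀ M, n ≤ M → (∏ k ∈ Finset.Ico n M, (rcoef μ ν b ε k)⁻¹) = G n / G M := by
    intro M hM
    induction M, hM using Nat.le_induction with
    | base => simp [div_self (Gpos n).ne']
    | succ M hM ih =>
      rw [Finset.prod_Ico_succ_top hM, ih]
      have hr : rcoef μ ν b ε M = G (M+1) / G M := by
        unfold rcoef
        simp only [hG, Nat.add_sub_cancel]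
        rw [Real.div_rpow (μpos (M+1)).le (μpos M).le,
            Real.div_rpow (Real.rpow_pos_of_pos (νpos M) _).le
              (Real.rpow_pos_of_pos (νpos (M-1)) _).le,
            div_mul_div_comm]
      rw [hr, inv_div, div_mul_div_comm]
      rw [div_eq_div_iff (mul_pos (Gpos M) (Gpos (M+1))).ne' (Gpos (M+1)).ne']
      ring
  have hnm' : n < m := lt_of_le_of_ne hnm (fun h => (Nat.not_odd_iff_even.mpr (h ▸ hme)) hno)
  have hm1 : 1 ≤ m := le_trans hn hnm
  have hodd : Odd (m - 1) := Nat.Even.sub_odd hm1 hme odd_one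
  have heven : Even (n - 1) := Nat.Odd.sub_odd hno odd_one
  have hGn : G n = μ n ^ b := by
    simp [hG, heven.neg_one_pow, Real.rpow_zero]
  have hGm : G m = μ m ^ b * ν (m-1) ^ (-ε) := by
    have h2 : ((-1:ℝ)^(m-1) - 1) = -2 := by rw [hodd.neg_one_pow]; ring
    rw [hG]
    simp only [h2]
    rw [← Real.rpow_mul (νpos (m-1)).le]
    congr 1
    ring
  rw [key m hnm, hGn, hGm]
  have hrw : (μ (m-1)/μ n)^(-b) = μ n ^ b / μ (m-1) ^ b := by
    rw [Real.rpow_neg (div_pos (μpos _) (μpos _)).le,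
        Real.div_rpow (μpos _).le (μpos _).le, inv_div]
  have hrhs : μ n ^ b / (μ m ^ b * ν (m-1) ^ (-ε)) = μ n ^ b / μ m ^ b * ν (m-1) ^ ε := by
    rw [Real.rpow_neg (νpos _).le]
    field_simp
  have hμm : μ m ≤ lam * μ (m-1) := by
    have h := hbound m hm1
    rw [div_le_iff₀ (μpos (m-1))] at h
    linarith
  have hmono : μ (m-1) ^ b ≤ μ m ^ b :=
    Real.rpow_le_rpow (μpos _).le (hμ.mono.monotone (Nat.sub_le m 1)) hb
  have hL : lam ^ (-b) * (μ n ^ b / μ (m-1) ^ b) = μ n ^ b / (lam * μ (m-1)) ^ b := by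
    rw [Real.mul_rpow hlam.le (μpos _).le, Real.rpow_neg hlam.le]
    field_simp
  have hmono2 : μ m ^ b ≤ (lam * μ (m-1)) ^ b :=
    Real.rpow_le_rpow (μpos _).le hμm hb
  rw [hrw, hrhs]
  constructor
  · rw [hL]
    gcongr <;> first
      | exact hmono2
      | exact (Real.rpow_pos_of_pos (νpos _) _).le
      | exact (Real.rpow_pos_of_pos (μpos _) _).le
      | exact Real.rpow_pos_of_pos (μpos _) _
  · gcongr <;> first
      | exact hmono
      | exact (Real.rpow_pos_of_pos (νpos _) _).le
      | exact (Real.rpow_pos_of_pos (μpos _) _).le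
      | exact Real.rpow_pos_of_pos (μpos _) _
end

section
/- Let a < 0, ε ≥ 0, q > 1 with aq + ε + 1 < 0, and let μ_n = ν_n = 1 + n. Define β_m = μ_{m−1}^a / (ν_{m−1}^{ε(1+1/q)} (Σ_{k=m}^∞ μ_k^{aq} ν_k^ε)^{1/q}). Then for every m ≥ 1: 2^{a + ε/q + 1/q} |aq + ε + 1|^{1/q} (1+m)^{−ε(1+2/q) − 1/q} ≤ β_m ≤ (|aq + ε + 1|^{1/q} / 2^{a − ε(1+1/q)}) (1+m)^{−ε(1+2/q) − 1/q}. -/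
open Real Filter Finset

/-!
Since `μ (m - 1) = m`, we have `β_m = m ^ (a - ε (1 + 1/q)) * S_m ^ (-1/q)` with
`S_m = ∑_{j ≥ 0} (m + j + 1) ^ (a q + ε)`. By the mean value theorem each term of `S_m` lies between
the integrals of `t ^ (a q + ε)` over the two neighbouring unit intervals, so telescoping gives
`(m + 1) ^ s / |s| ≤ S_m ≤ m ^ s / |s|` for `s = a q + ε + 1 < 0`. Both bounds on `β_m` follow after
trading `m` for `1 + m` through `(1 + m) / 2 ≤ m ≤ 1 + m`, which is where the powers of `2` come from.
-/

open Topology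

lemma hasSum_sub_succ_of_antitone {F : ℕ → ℝ} (hF : Antitone F)
    (hlim : Tendsto F atTop (𝓝 0)) : HasSum (fun n => F n - F (n + 1)) (F 0) := by
  rw [hasSum_iff_tendsto_nat_of_nonneg fun n => sub_nonneg.2 (hF n.le_succ)]
  simp_rw [Finset.sum_range_sub']
  simpa using tendsto_const_nhds.sub hlim

lemma rpow_add_one_sub_rpow_div_mem_Icc {p x : ℝ} (hp0 : p ≤ 0) (hp : p ≠ -1) (hx : 0 < x) :
    ((x + 1) ^ (p + 1) - x ^ (p + 1)) / (p + 1) ∈ Set.Icc ((x + 1) ^ p) (x ^ p) := by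
  have hp1 : p + 1 ≠ 0 := fun h => hp (by linarith)
  obtain ⟨ξ, ⟨hxξ, hξx⟩, hderiv⟩ := exists_hasDerivAt_eq_slope (fun t => t ^ (p + 1))
    (fun t => (p + 1) * t ^ p) (lt_add_one x)
    (continuousOn_id.rpow_const fun t ht => Or.inl (hx.trans_le ht.1).ne')
    (fun t ht => by
      simpa using Real.hasDerivAt_rpow_const (p := p + 1) (Or.inl (hx.trans ht.1).ne'))
  have hslope : ((x + 1) ^ (p + 1) - x ^ (p + 1)) / (p + 1) = ξ ^ p := by
    rw [add_sub_cancel_left, div_one] at hderiv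
    rw [← hderiv, mul_div_cancel_left₀ _ hp1]
  rw [hslope]
  exact ⟨rpow_le_rpow_of_nonpos (hx.trans hxξ) hξx.le hp0,
    rpow_le_rpow_of_nonpos hx hxξ.le hp0⟩

lemma hasSum_rpow_add_natCast_decrement {p y : ℝ} (hp : p < -1) (hy : 0 < y) :
    HasSum (fun j : ℕ => ((y + j + 1) ^ (p + 1) - (y + j) ^ (p + 1)) / (p + 1))
      (y ^ (p + 1) / -(p + 1)) := by
  have hp1 : 0 < -(p + 1) := by linarith
  set F : ℕ → ℝ := fun j => (y + j) ^ (p + 1) / -(p + 1)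
  have hF : Antitone F := fun i j hij => by
    dsimp only [F]
    gcongr ?_ / _
    exact rpow_le_rpow_of_nonpos (by positivity) (by gcongr) (by linarith)
  have hlim : Tendsto F atTop (𝓝 0) := by
    have hpow : Tendsto (fun t : ℝ => t ^ (p + 1)) atTop (𝓝 0) := by
      simpa using tendsto_rpow_neg_atTop hp1
    simpa [F] using (hpow.comp (tendsto_atTop_add_const_left atTop y
      tendsto_natCast_atTop_atTop)).div_const (-(p + 1))
  convert hasSum_sub_succ_of_antitone hF hlim using 1
  · ext j
    simp only [F, Nat.cast_succ, ← add_assoc, div_neg]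
    ring
  · simp [F]

lemma summable_rpow_add_natCast {p x : ℝ} (hp : p < -1) (hx : 0 < x) :
    Summable (fun j : ℕ => (x + j + 1) ^ p) :=
  (hasSum_rpow_add_natCast_decrement hp hx).summable.of_nonneg_of_le (fun j => by positivity)
    fun j => (rpow_add_one_sub_rpow_div_mem_Icc (by linarith) hp.ne (by positivity)).1

lemma tsum_rpow_add_natCast_le {p x : ℝ} (hp : p < -1) (hx : 0 < x) :
    ∑' j : ℕ, (x + j + 1) ^ p ≤ x ^ (p + 1) / -(p + 1) :=
  hasSum_le (fun j => (rpow_add_one_sub_rpow_div_mem_Icc (by linarith) hp.ne (by positivity)).1)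
    (summable_rpow_add_natCast hp hx).hasSum (hasSum_rpow_add_natCast_decrement hp hx)

lemma le_tsum_rpow_add_natCast {p x : ℝ} (hp : p < -1) (hx : 0 < x) :
    (x + 1) ^ (p + 1) / -(p + 1) ≤ ∑' j : ℕ, (x + j + 1) ^ p := by
  refine hasSum_le (fun j => ?_) (hasSum_rpow_add_natCast_decrement hp (by linarith))
    (summable_rpow_add_natCast hp hx).hasSum
  rw [add_right_comm x 1]
  exact (rpow_add_one_sub_rpow_div_mem_Icc (by linarith) hp.ne (by positivity)).2

lemma tsum_subtype_le_eq_tsum_add {M : Type*} [AddCommMonoid M] [TopologicalSpace M]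
    (f : ℕ → M) (m : ℕ) : ∑' k : {k : ℕ // m ≤ k}, f k = ∑' j : ℕ, f (m + j) :=
  (Equiv.tsum_eq
    { toFun := fun j => ⟨m + j, Nat.le_add_right m j⟩
      invFun := fun k => k.1 - m
      left_inv := fun j => Nat.add_sub_cancel_left m j
      right_inv := fun k => Subtype.ext (Nat.add_sub_cancel' k.2) }
    fun k => f k).symm

lemma betaSeq_one_add_natCast (a ε q : ℝ) {m : ℕ} (hm : 1 ≤ m) :
    betaSeq (fun n : ℕ => (1 : ℝ) + n) (fun n : ℕ => (1 : ℝ) + n) a ε q m =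
      (m : ℝ) ^ (a - ε * (1 + 1 / q)) *
        (∑' j : ℕ, ((m : ℝ) + j + 1) ^ (a * q + ε)) ^ (-(1 / q)) := by
  have hm0 : (0 : ℝ) < m := by exact_mod_cast hm
  have hpred : (1 : ℝ) + ((m - 1 : ℕ) : ℝ) = m := by
    rw [Nat.cast_sub hm]
    ring
  have hsum : ∑' k : {k : ℕ // m ≤ k}, ((1 : ℝ) + k.1) ^ (a * q) * ((1 : ℝ) + k.1) ^ ε =
      ∑' j : ℕ, ((m : ℝ) + j + 1) ^ (a * q + ε) := by
    rw [tsum_subtype_le_eq_tsum_add (fun k => ((1 : ℝ) + k) ^ (a * q) * ((1 : ℝ) + k) ^ ε)]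
    congr 1 with j
    rw [← rpow_add (by positivity)]
    push_cast
    ring_nf
  rw [betaSeq, hpred, hsum, rpow_sub hm0, rpow_neg (tsum_nonneg fun j => by positivity)]
  field_simp

lemma rpow_div_rpow_neg {y c : ℝ} (hy : 0 ≤ y) (hc : 0 ≤ c) (s r : ℝ) :
    (y ^ s / c) ^ (-r) = c ^ r * y ^ (-(s * r)) := by
  rw [rpow_neg (div_nonneg (rpow_nonneg hy s) hc), div_rpow (rpow_nonneg hy s) hc,
    ← rpow_mul hy, rpow_neg hy, inv_div, div_eq_mul_inv]

section PolynomialBeta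

variable {a ε q : ℝ} {m : ℕ}

lemma beta_exponent_eq (hq : 0 < q) :
    a - ε * (1 + 1 / q) - (a * q + ε + 1) * (1 / q) = -(ε * (1 + 2 / q)) - 1 / q := by
  field_simp
  ring

lemma beta_exponent_nonpos (hε : 0 ≤ ε) (hq : 0 < q) : -(ε * (1 + 2 / q)) - 1 / q ≤ 0 := by
  have : 0 < 1 / q := by positivity
  have : 0 ≤ ε * (1 + 2 / q) := by positivity
  linarith

lemma le_betaSeq_one_add_natCast (hε : 0 ≤ ε) (hq : 0 < q) (hs : a * q + ε + 1 < 0)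
    (hm : 1 ≤ m) :
    2 ^ (a + ε / q + 1 / q) * |a * q + ε + 1| ^ (1 / q) *
        ((1 : ℝ) + m) ^ (-(ε * (1 + 2 / q)) - 1 / q) ≤
      betaSeq (fun n : ℕ => (1 : ℝ) + n) (fun n : ℕ => (1 : ℝ) + n) a ε q m := by
  set s := a * q + ε + 1
  set e := -(ε * (1 + 2 / q)) - 1 / q
  set S := ∑' j : ℕ, ((m : ℝ) + j + 1) ^ (a * q + ε)
  have hm0 : (0 : ℝ) < m := by exact_mod_cast hm
  have hc : 0 < -s := neg_pos.2 hs
  have hS : S ≤ (m : ℝ) ^ s / -s := tsum_rpow_add_natCast_le (by linarith) hm0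
  have hS0 : 0 < S := lt_of_lt_of_le (by positivity) (le_tsum_rpow_add_natCast (by linarith) hm0)
  have htwo : (2 : ℝ) ^ (a + ε / q + 1 / q) ≤ 1 := by
    refine rpow_le_one_of_one_le_of_nonpos one_le_two ?_
    rw [show a + ε / q + 1 / q = s / q by simp only [s]; field_simp]
    exact (div_neg_of_neg_of_pos hs hq).le
  rw [betaSeq_one_add_natCast a ε q hm, abs_of_neg hs]
  calc 2 ^ (a + ε / q + 1 / q) * (-s) ^ (1 / q) * (1 + m : ℝ) ^ e
      ≤ (-s) ^ (1 / q) * (m : ℝ) ^ e := by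
        rw [mul_assoc]
        refine mul_le_of_le_one_left (by positivity) htwo |>.trans ?_
        exact mul_le_mul_of_nonneg_left
          (rpow_le_rpow_of_nonpos hm0 (by linarith) (beta_exponent_nonpos hε hq)) (by positivity)
    _ = (m : ℝ) ^ (a - ε * (1 + 1 / q)) * ((m : ℝ) ^ s / -s) ^ (-(1 / q)) := by
        rw [rpow_div_rpow_neg hm0.le hc.le, mul_left_comm, ← rpow_add hm0, ← sub_eq_add_neg,
          beta_exponent_eq hq]
    _ ≤ (m : ℝ) ^ (a - ε * (1 + 1 / q)) * S ^ (-(1 / q)) := by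
        refine mul_le_mul_of_nonneg_left (rpow_le_rpow_of_nonpos hS0 hS ?_) (by positivity)
        exact neg_nonpos.2 (by positivity)

lemma betaSeq_one_add_natCast_le (hε : 0 ≤ ε) (hq : 0 < q) (hs : a * q + ε + 1 < 0)
    (hm : 1 ≤ m) :
    betaSeq (fun n : ℕ => (1 : ℝ) + n) (fun n : ℕ => (1 : ℝ) + n) a ε q m ≤
      |a * q + ε + 1| ^ (1 / q) / 2 ^ (a - ε * (1 + 1 / q)) *
        ((1 : ℝ) + m) ^ (-(ε * (1 + 2 / q)) - 1 / q) := by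
  set s := a * q + ε + 1
  set t := a - ε * (1 + 1 / q)
  set S := ∑' j : ℕ, ((m : ℝ) + j + 1) ^ (a * q + ε)
  have hm0 : (0 : ℝ) < m := by exact_mod_cast hm
  have hc : 0 < -s := neg_pos.2 hs
  have hS : (m + 1 : ℝ) ^ s / -s ≤ S := le_tsum_rpow_add_natCast (by linarith) hm0
  have ht : t ≤ 0 := by
    have := beta_exponent_eq (a := a) (ε := ε) hq
    have := beta_exponent_nonpos hε hq
    have : s * (1 / q) < 0 := mul_neg_of_neg_of_pos hs (by positivity)
    linarith
  rw [betaSeq_one_add_natCast a ε q hm, abs_of_neg hs]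
  calc (m : ℝ) ^ t * S ^ (-(1 / q))
      ≤ (m : ℝ) ^ t * ((m + 1 : ℝ) ^ s / -s) ^ (-(1 / q)) := by
        refine mul_le_mul_of_nonneg_left (rpow_le_rpow_of_nonpos (by positivity) hS ?_)
          (by positivity)
        exact neg_nonpos.2 (by positivity)
    _ = (-s) ^ (1 / q) * (m : ℝ) ^ t * (1 + m : ℝ) ^ (-(s * (1 / q))) := by
        rw [rpow_div_rpow_neg (by positivity) hc.le, add_comm (m : ℝ) 1]
        ring
    _ ≤ (-s) ^ (1 / q) * ((1 + m : ℝ) / 2) ^ t * (1 + m : ℝ) ^ (-(s * (1 / q))) := by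
        refine mul_le_mul_of_nonneg_right (mul_le_mul_of_nonneg_left
          (rpow_le_rpow_of_nonpos (by positivity) ?_ ht) (by positivity)) (by positivity)
        have : (1 : ℝ) ≤ m := by exact_mod_cast hm
        linarith
    _ = (-s) ^ (1 / q) / 2 ^ t * (1 + m : ℝ) ^ (-(ε * (1 + 2 / q)) - 1 / q) := by
        rw [div_rpow (by positivity) zero_le_two, ← beta_exponent_eq hq, sub_eq_add_neg,
          rpow_add (by positivity)]
        ring

end PolynomialBeta

theorem polynomial_beta_bounds_general (a ε q : ℝ)
    (hε : 0 ≤ ε) (hq : 1 < q) (hconv : a * q + ε + 1 < 0) :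
    ∀ m : ℕ, 1 ≤ m →
      2 ^ (a + ε / q + 1 / q) * |a * q + ε + 1| ^ (1 / q) *
          ((1 : ℝ) + (m : ℝ)) ^ (-(ε * (1 + 2 / q)) - 1 / q) ≤
        betaSeq (fun n : ℕ => (1 : ℝ) + (n : ℝ)) (fun n : ℕ => (1 : ℝ) + (n : ℝ)) a ε q m ∧
      betaSeq (fun n : ℕ => (1 : ℝ) + (n : ℝ)) (fun n : ℕ => (1 : ℝ) + (n : ℝ)) a ε q m ≤
        |a * q + ε + 1| ^ (1 / q) / 2 ^ (a - ε * (1 + 1 / q)) *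
          ((1 : ℝ) + (m : ℝ)) ^ (-(ε * (1 + 2 / q)) - 1 / q) := by
  have hq0 : 0 < q := by linarith
  exact fun m hm => ⟨le_betaSeq_one_add_natCast hε hq0 hconv hm,
    betaSeq_one_add_natCast_le hε hq0 hconv hm⟩

/-- bounds on `β_m` in the polynomial case `μ_n = ν_n = 1 + n`. -/
theorem polynomial_beta_bounds (a ε q : ℝ)
    (ha : a < 0) (hε : 0 ≤ ε) (hq : 1 < q) (hconv : a * q + ε + 1 < 0) :
    ∀ m : ℕ, 1 ≤ m →
      2 ^ (a + ε / q + 1 / q) * |a * q + ε + 1| ^ (1 / q) *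
          ((1 : ℝ) + (m : ℝ)) ^ (-(ε * (1 + 2 / q)) - 1 / q) ≤
        betaSeq (fun n : ℕ => (1 : ℝ) + (n : ℝ)) (fun n : ℕ => (1 : ℝ) + (n : ℝ)) a ε q m ∧
      betaSeq (fun n : ℕ => (1 : ℝ) + (n : ℝ)) (fun n : ℕ => (1 : ℝ) + (n : ℝ)) a ε q m ≤
        |a * q + ε + 1| ^ (1 / q) / 2 ^ (a - ε * (1 + 1 / q)) *
          ((1 : ℝ) + (m : ℝ)) ^ (-(ε * (1 + 2 / q)) - 1 / q) :=
  polynomial_beta_bounds_general a ε q hε hq hconv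
end

section
/- Let a < 0, ε ≥ 0, q > 1 with aq + ε + 1 < 0, let μ_n = ν_n = 1 + n, and define β_m = μ_{m−1}^a / (ν_{m−1}^{ε(1+1/q)} (Σ_{k=m}^∞ μ_k^{aq} ν_k^ε)^{1/q}). Then for all m ≥ n ≥ 1: (μ_m^a β_m^{−1})/(μ_{n−1}^a β_n^{−1}) ≤ 2^{−2a + ε − 1/q} ((1+m)/(1+n))^{a + ε(1+2/q) + 1/q}. In particular, if a + ε(1+2/q) + 1/q ≤ 0 then there is a constant K ≥ 1 with (μ_m^a β_m^{−1})/(μ_{n−1}^a β_n^{−1}) ≤ K for all m ≥ n ≥ 1. -/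
open Real Filter Finset

section Helpers
open Set

private lemma rpow_step {r x : ℝ} (hr : r < 0) (hx : 1 ≤ x) :
    (-r) * (x+1)^(r-1) ≤ x^r - (x+1)^r ∧ x^r - (x+1)^r ≤ (-r) * x^(r-1) := by
  have hx0 : (0:ℝ) < x := lt_of_lt_of_le one_pos hx
  obtain ⟨c, hc, hder⟩ := exists_hasDerivAt_eq_slope (fun t : ℝ => t ^ r)
    (fun t : ℝ => r * t ^ (r-1)) (by linarith : x < x + 1)
    (by
      apply ContinuousOn.rpow_const continuousOn_id
      intro t ht
      exact Or.inl (show id t ≠ 0 by rcases ht with ⟨h1, _⟩; simp only [id_eq]; exact ne_of_gt (by linarith)))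
    (fun t ht => Real.hasDerivAt_rpow_const (Or.inl (ne_of_gt (by rcases ht with ⟨h1,_⟩; linarith))))
  have hc0 : 0 < c := lt_trans hx0 hc.1
  have key : (x+1)^r - x^r = r * c ^ (r-1) := by
    rw [hder]; ring
  constructor
  · have : c ^ (r-1) ≥ (x+1)^(r-1) :=
      rpow_le_rpow_of_nonpos hc0 (le_of_lt hc.2) (by linarith)
    nlinarith [this]
  · have : c ^ (r-1) ≤ x^(r-1) :=
      rpow_le_rpow_of_nonpos hx0 (le_of_lt hc.1) (by linarith)
    nlinarith [this]

lemma telescope_hasSum {r : ℝ} (hr : r < 0) {y : ℝ} (hy : 1 ≤ y) :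
    HasSum (fun i : ℕ => (y+i)^r - (y+i+1)^r) (y^r) := by
  have hnn : ∀ i : ℕ, 0 ≤ (y+i)^r - (y+i+1)^r := by
    intro i
    have := rpow_le_rpow_of_nonpos (by positivity : (0:ℝ) < y + i) (by linarith : (y:ℝ)+i ≤ y+i+1) hr.le
    linarith
  rw [hasSum_iff_tendsto_nat_of_nonneg hnn]
  have hps : ∀ n : ℕ, ∑ i ∈ Finset.range n, ((y+i)^r - (y+i+1)^r) = y^r - (y+n)^r := by
    intro n
    have := Finset.sum_range_sub' (fun i : ℕ => (y+(i:ℝ))^r) n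
    simpa [add_assoc] using this
  simp only [hps]
  have h0 : Tendsto (fun n : ℕ => (y+(n:ℝ))^r) atTop (nhds 0) := by
    have h1 : Tendsto (fun n : ℕ => y+(n:ℝ)) atTop atTop :=
      tendsto_atTop_add_const_left _ _ tendsto_natCast_atTop_atTop
    have h2 : Tendsto (fun x : ℝ => x ^ r) atTop (nhds 0) := by
      have := tendsto_rpow_neg_atTop (by linarith : (0:ℝ) < -r)
      simpa using this
    exact h2.comp h1
  simpa using (tendsto_const_nhds (x := y^r)).sub h0

def tailEquiv (m : ℕ) : ℕ ≃ {k : ℕ // m ≤ k} where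
  toFun := fun i => ⟨m + i, Nat.le_add_right m i⟩
  invFun := fun k => k.1 - m
  left_inv := fun i => by simp
  right_inv := fun k => by
    ext; simp [Nat.add_sub_cancel' k.2]

lemma tail_sum_bounds {r : ℝ} (hr : r < 0) {m : ℕ} (hm : 1 ≤ m) :
    ((m:ℝ)+1)^r / (-r) ≤ (∑' k : {k : ℕ // m ≤ k}, (1 + (k.1:ℝ)) ^ (r-1)) ∧
    (∑' k : {k : ℕ // m ≤ k}, (1 + (k.1:ℝ)) ^ (r-1)) ≤ (m:ℝ)^r / (-r) := by
  have hrpos : (0:ℝ) < -r := by linarith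
  have hm1 : (1:ℝ) ≤ (m:ℝ) := by exact_mod_cast hm
  have hts : (∑' k : {k : ℕ // m ≤ k}, (1 + (k.1:ℝ)) ^ (r-1))
      = ∑' i : ℕ, ((m:ℝ) + i + 1) ^ (r-1) := by
    rw [← Equiv.tsum_eq (tailEquiv m) (fun k : {k : ℕ // m ≤ k} => (1 + (k.1:ℝ)) ^ (r-1))]
    apply tsum_congr
    intro i
    show (1 + ((m + i : ℕ):ℝ)) ^ (r-1) = ((m:ℝ) + i + 1) ^ (r-1)
    push_cast
    ring_nf
  -- summability of the tail terms
  have hsum : Summable (fun i : ℕ => ((m:ℝ) + i + 1) ^ (r-1)) := by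
    have h1 : Summable (fun k : ℕ => ((k:ℝ)) ^ (r-1)) :=
      Real.summable_nat_rpow.2 (by linarith)
    have h2 : Summable (fun i : ℕ => ((i + (m + 1) : ℕ):ℝ) ^ (r-1)) :=
      (summable_nat_add_iff (f := fun k : ℕ => ((k:ℝ)) ^ (r-1)) (m+1)).2 h1
    apply h2.congr
    intro i
    push_cast
    ring_nf
  have hup := telescope_hasSum hr (by linarith : (1:ℝ) ≤ (m:ℝ))
  have hlo := telescope_hasSum hr (by linarith : (1:ℝ) ≤ (m:ℝ)+1)
  rw [hts]
  constructor
  · -- lower bound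
    have hterm : ∀ i : ℕ, (((m:ℝ)+1+i)^r - ((m:ℝ)+1+i+1)^r) / (-r) ≤ ((m:ℝ) + i + 1) ^ (r-1) := by
      intro i
      have hx : (1:ℝ) ≤ (m:ℝ)+i+1 := by have : (0:ℝ) ≤ (i:ℝ) := Nat.cast_nonneg i; linarith
      have := (rpow_step hr hx).2
      rw [div_le_iff₀ hrpos]
      calc ((m:ℝ)+1+i)^r - ((m:ℝ)+1+i+1)^r = ((m:ℝ)+i+1)^r - (((m:ℝ)+i+1)+1)^r := by ring_nf
        _ ≤ (-r) * ((m:ℝ)+i+1)^(r-1) := this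
        _ = ((m:ℝ)+i+1)^(r-1) * -r := by ring
    have hdiv : HasSum (fun i : ℕ => (((m:ℝ)+1+i)^r - ((m:ℝ)+1+i+1)^r) / (-r)) (((m:ℝ)+1)^r / (-r)) :=
      hlo.div_const _
    calc ((m:ℝ)+1)^r / (-r) = ∑' i : ℕ, (((m:ℝ)+1+i)^r - ((m:ℝ)+1+i+1)^r) / (-r) := hdiv.tsum_eq.symm
      _ ≤ ∑' i : ℕ, ((m:ℝ) + i + 1) ^ (r-1) := Summable.tsum_le_tsum hterm hdiv.summable hsum
  · -- upper bound
    have hterm : ∀ i : ℕ, ((m:ℝ) + i + 1) ^ (r-1) ≤ (((m:ℝ)+i)^r - ((m:ℝ)+i+1)^r) / (-r) := by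
      intro i
      have hx : (1:ℝ) ≤ (m:ℝ)+i := by have : (0:ℝ) ≤ (i:ℝ) := Nat.cast_nonneg i; linarith
      have := (rpow_step hr hx).1
      rw [le_div_iff₀ hrpos]
      nlinarith [this]
    have hdiv : HasSum (fun i : ℕ => (((m:ℝ)+i)^r - ((m:ℝ)+i+1)^r) / (-r)) ((m:ℝ)^r / (-r)) :=
      hup.div_const _
    calc (∑' i : ℕ, ((m:ℝ) + i + 1) ^ (r-1)) ≤ ∑' i : ℕ, (((m:ℝ)+i)^r - ((m:ℝ)+i+1)^r) / (-r) :=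
          Summable.tsum_le_tsum hterm hsum hdiv.summable
      _ = (m:ℝ)^r / (-r) := hdiv.tsum_eq

lemma main_ineq (a ε q : ℝ)
    (ha : a < 0) (hε : 0 ≤ ε) (hq : 1 < q) (hconv : a * q + ε + 1 < 0)
    (m n : ℕ) (hn : 1 ≤ n) (hnm : n ≤ m) :
    ((1 : ℝ) + (m : ℝ)) ^ a *
        (betaSeq (fun j : ℕ => (1 : ℝ) + (j : ℝ)) (fun j : ℕ => (1 : ℝ) + (j : ℝ)) a ε q m)⁻¹ /
      (((1 : ℝ) + ((n - 1 : ℕ) : ℝ)) ^ a *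
        (betaSeq (fun j : ℕ => (1 : ℝ) + (j : ℝ)) (fun j : ℕ => (1 : ℝ) + (j : ℝ)) a ε q n)⁻¹) ≤
      2 ^ (-(2 * a) + ε - 1 / q) *
        (((1 : ℝ) + (m : ℝ)) / ((1 : ℝ) + (n : ℝ))) ^ (a + ε * (1 + 2 / q) + 1 / q) := by
  set r : ℝ := a * q + ε + 1 with hrdef
  have hr : r < 0 := hconv
  have hrpos : (0:ℝ) < -r := by linarith
  have hq0 : (0:ℝ) < q := by linarith
  have hm : 1 ≤ m := le_trans hn hnm
  set e1 : ℝ := ε * (1 + 1 / q) with he1def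
  have he1 : 0 ≤ e1 := by positivity
  -- real versions
  have hn1 : (1:ℝ) ≤ (n:ℝ) := by exact_mod_cast hn
  have hm1 : (1:ℝ) ≤ (m:ℝ) := by exact_mod_cast hm
  have hnm' : (n:ℝ) ≤ (m:ℝ) := by exact_mod_cast hnm
  set M : ℝ := 1 + (m:ℝ) with hMdef
  set N : ℝ := 1 + (n:ℝ) with hNdef
  have hM0 : 0 < M := by simp only [hMdef]; positivity
  have hN0 : 0 < N := by simp only [hNdef]; positivity
  have hm'0 : (0:ℝ) < (m:ℝ) := by linarith
  have hn'0 : (0:ℝ) < (n:ℝ) := by linarith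
  -- the tail sums
  set S : ℕ → ℝ := fun j => ∑' k : {k : ℕ // j ≤ k}, (1 + (k.1:ℝ)) ^ (r-1) with hSdef
  have hSeq : ∀ j : ℕ,
      (∑' k : {k : ℕ // j ≤ k}, (1 + (k.1:ℝ)) ^ (a * q) * (1 + (k.1:ℝ)) ^ ε) = S j := by
    intro j
    apply tsum_congr
    intro k
    rw [← Real.rpow_add (by positivity : (0:ℝ) < 1 + (k.1:ℝ))]
    congr 1
    rw [hrdef]; ring
  have hSlo : ∀ j : ℕ, 1 ≤ j → ((j:ℝ)+1)^r / (-r) ≤ S j := fun j hj => (tail_sum_bounds hr hj).1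
  have hSup : ∀ j : ℕ, 1 ≤ j → S j ≤ (j:ℝ)^r / (-r) := fun j hj => (tail_sum_bounds hr hj).2
  have hSpos : ∀ j : ℕ, 1 ≤ j → 0 < S j := by
    intro j hj
    refine lt_of_lt_of_le ?_ (hSlo j hj)
    have : (0:ℝ) < ((j:ℝ)+1)^r := by positivity
    positivity
  -- betaSeq simplification
  have hbeta : ∀ j : ℕ, 1 ≤ j →
      betaSeq (fun j : ℕ => (1 : ℝ) + (j : ℝ)) (fun j : ℕ => (1 : ℝ) + (j : ℝ)) a ε q j
        = (j:ℝ)^a / ((j:ℝ)^e1 * (S j)^(1/q)) := by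
    intro j hj
    have hcast : (1 : ℝ) + ((j - 1 : ℕ) : ℝ) = (j:ℝ) := by
      rw [Nat.cast_sub hj]; push_cast; ring
    rw [betaSeq, hcast, hSeq j, he1def]
  rw [hbeta m hm, hbeta n hn]
  -- positivity of components
  have hSm := hSpos m hm
  have hSn := hSpos n hn
  have hma : (0:ℝ) < (m:ℝ)^a := by positivity
  have hna : (0:ℝ) < (n:ℝ)^a := by positivity
  have hme : (0:ℝ) < (m:ℝ)^e1 := by positivity
  have hne : (0:ℝ) < (n:ℝ)^e1 := by positivity
  have hDm : (0:ℝ) < (S m)^(1/q) := by positivity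
  have hDn : (0:ℝ) < (S n)^(1/q) := by positivity
  have hcast : (1 : ℝ) + ((n - 1 : ℕ) : ℝ) = (n:ℝ) := by
    rw [Nat.cast_sub hn]; push_cast; ring
  rw [hcast]
  -- rewrite LHS as product of three factors
  have hLHS : M ^ a * ((m:ℝ)^a / ((m:ℝ)^e1 * (S m)^(1/q)))⁻¹ /
      ((n:ℝ) ^ a * ((n:ℝ)^a / ((n:ℝ)^e1 * (S n)^(1/q)))⁻¹)
      = (M^a / (m:ℝ)^a) * (((m:ℝ)^e1 / (n:ℝ)^e1) * ((S m)^(1/q) / (S n)^(1/q))) := by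
    field_simp
  rw [hLHS]
  -- three bounds
  have h1 : M^a / (m:ℝ)^a ≤ 1 := by
    rw [div_le_one hma]
    exact Real.rpow_le_rpow_of_nonpos hm'0 (by rw [hMdef]; linarith) ha.le
  have h2 : (m:ℝ)^e1 / (n:ℝ)^e1 ≤ 2^e1 * (M/N)^e1 := by
    rw [← Real.div_rpow hm'0.le hn'0.le, ← Real.mul_rpow (by norm_num) (by positivity)]
    apply Real.rpow_le_rpow (by positivity) _ he1
    have h2M : 2 * (M/N) = (2*M)/N := by ring
    rw [h2M, div_le_div_iff₀ hn'0 hN0]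
    have hN2n : N ≤ 2 * (n:ℝ) := by rw [hNdef]; linarith
    have hmM : (m:ℝ) ≤ M := by rw [hMdef]; linarith
    nlinarith
  have h3 : (S m)^(1/q) / (S n)^(1/q) ≤ (1/2)^(r*(1/q)) * (M/N)^(r*(1/q)) := by
    have hup : S m ≤ (M/2)^r / (-r) := by
      refine le_trans (hSup m hm) ?_
      have hb : (m:ℝ)^r ≤ (M/2)^r :=
        Real.rpow_le_rpow_of_nonpos (by positivity) (by rw [hMdef]; linarith) hr.le
      exact div_le_div₀ (by positivity) hb hrpos (le_refl _)
    have hlo : N^r / (-r) ≤ S n := by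
      have := hSlo n hn
      rw [hNdef]
      convert this using 3
      ring
    have hnum : (S m)^(1/q) ≤ ((M/2)^r / (-r))^(1/q) :=
      Real.rpow_le_rpow hSm.le hup (by positivity)
    have hden : (N^r / (-r))^(1/q) ≤ (S n)^(1/q) :=
      Real.rpow_le_rpow (by positivity) hlo (by positivity)
    have hdenpos : (0:ℝ) < (N^r / (-r))^(1/q) := by
      have : (0:ℝ) < N^r := by positivity
      positivity
    calc (S m)^(1/q) / (S n)^(1/q) ≤ ((M/2)^r / (-r))^(1/q) / (N^r / (-r))^(1/q) :=
          div_le_div₀ (by positivity) hnum hdenpos hden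
      _ = (((M/2)^r / (-r)) / (N^r / (-r)))^(1/q) := by
          rw [← Real.div_rpow (by positivity) (by positivity)]
      _ = ((M/2)^r / N^r)^(1/q) := by
          congr 1
          exact div_div_div_cancel_right₀ (by positivity : -r ≠ 0) _ _
      _ = (((M/2) / N)^r)^(1/q) := by
          rw [← Real.div_rpow (by positivity) hN0.le]
      _ = ((M/(2*N))^r)^(1/q) := by
          have : M/2/N = M/(2*N) := by
            rw [div_div]
          rw [this]
      _ = (M/(2*N))^(r*(1/q)) := by
          rw [← Real.rpow_mul (by positivity)]
      _ = ((M/N)*(1/2))^(r*(1/q)) := by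
          have : M/(2*N) = (M/N)*(1/2) := by
            rw [div_mul_div_comm, mul_one, mul_comm N 2]
          rw [this]
      _ = (M/N)^(r*(1/q)) * (1/2)^(r*(1/q)) := by
          rw [Real.mul_rpow (by positivity) (by norm_num)]
      _ = (1/2)^(r*(1/q)) * (M/N)^(r*(1/q)) := by ring
  -- combine
  have hcomb : (M^a / (m:ℝ)^a) * (((m:ℝ)^e1 / (n:ℝ)^e1) * ((S m)^(1/q) / (S n)^(1/q)))
      ≤ 1 * ((2^e1 * (M/N)^e1) * ((1/2)^(r*(1/q)) * (M/N)^(r*(1/q)))) := by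
    apply mul_le_mul h1 _ (by positivity) (by norm_num)
    apply mul_le_mul h2 h3 (by positivity) (by positivity)
  refine le_trans hcomb ?_
  -- final algebra
  have hhalf : (1/2:ℝ)^(r*(1/q)) = 2^(-(r*(1/q))) := by
    rw [one_div, ← Real.rpow_neg_one, ← Real.rpow_mul (by norm_num)]
    congr 1
    ring
  rw [hhalf]
  rw [one_mul]
  have hrearr : (2:ℝ)^e1 * (M/N)^e1 * (2^(-(r*(1/q))) * (M/N)^(r*(1/q)))
      = (2^e1 * 2^(-(r*(1/q)))) * ((M/N)^e1 * (M/N)^(r*(1/q))) := by ring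
  rw [hrearr, ← Real.rpow_add (by norm_num : (0:ℝ) < 2),
    ← Real.rpow_add (by positivity : (0:ℝ) < M/N)]
  have hexp1 : e1 + r*(1/q) = a + ε * (1 + 2 / q) + 1 / q := by
    rw [he1def, hrdef]; field_simp; ring
  have hexp2 : e1 + -(r*(1/q)) ≤ -(2*a) + ε - 1/q := by
    have : e1 + -(r*(1/q)) = -a + ε - 1/q := by rw [he1def, hrdef]; field_simp; ring
    rw [this]; linarith
  rw [hexp1]
  apply mul_le_mul_of_nonneg_right _ (by positivity)
  exact Real.rpow_le_rpow_of_exponent_le one_le_two hexp2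

end Helpers

/-- condition (eq:decreasing) in the polynomial case `μ_n = ν_n = 1 + n`. -/
theorem polynomial_decreasing_condition (a ε q : ℝ)
    (ha : a < 0) (hε : 0 ≤ ε) (hq : 1 < q) (hconv : a * q + ε + 1 < 0) :
    (∀ m n : ℕ, 1 ≤ n → n ≤ m →
      ((1 : ℝ) + (m : ℝ)) ^ a *
          (betaSeq (fun j : ℕ => (1 : ℝ) + (j : ℝ)) (fun j : ℕ => (1 : ℝ) + (j : ℝ)) a ε q m)⁻¹ /
        (((1 : ℝ) + ((n - 1 : ℕ) : ℝ)) ^ a *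
          (betaSeq (fun j : ℕ => (1 : ℝ) + (j : ℝ)) (fun j : ℕ => (1 : ℝ) + (j : ℝ)) a ε q n)⁻¹) ≤
        2 ^ (-(2 * a) + ε - 1 / q) *
          (((1 : ℝ) + (m : ℝ)) / ((1 : ℝ) + (n : ℝ))) ^ (a + ε * (1 + 2 / q) + 1 / q)) ∧
    (a + ε * (1 + 2 / q) + 1 / q ≤ 0 →
      ∃ K : ℝ, 1 ≤ K ∧ ∀ m n : ℕ, 1 ≤ n → n ≤ m →
        ((1 : ℝ) + (m : ℝ)) ^ a *
            (betaSeq (fun j : ℕ => (1 : ℝ) + (j : ℝ)) (fun j : ℕ => (1 : ℝ) + (j : ℝ)) a ε q m)⁻¹ /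
          (((1 : ℝ) + ((n - 1 : ℕ) : ℝ)) ^ a *
            (betaSeq (fun j : ℕ => (1 : ℝ) + (j : ℝ)) (fun j : ℕ => (1 : ℝ) + (j : ℝ)) a ε q n)⁻¹) ≤
          K) := by
  constructor
  · exact fun m n hn hnm => main_ineq a ε q ha hε hq hconv m n hn hnm
  · intro he
    refine ⟨max 1 (2 ^ (-(2*a)+ε-1/q)), le_max_left _ _, ?_⟩
    intro m n hn hnm
    refine le_trans (main_ineq a ε q ha hε hq hconv m n hn hnm) ?_
    have hN0 : (0:ℝ) < 1 + (n:ℝ) := by positivity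
    have hratio : (1:ℝ) ≤ (1+(m:ℝ))/(1+(n:ℝ)) := by
      rw [le_div_iff₀ hN0]
      have : (n:ℝ) ≤ (m:ℝ) := by exact_mod_cast hnm
      linarith
    have h1 : ((1+(m:ℝ))/(1+(n:ℝ)))^(a+ε*(1+2/q)+1/q) ≤ 1 :=
      Real.rpow_le_one_of_one_le_of_nonpos hratio he
    calc (2:ℝ) ^ (-(2*a)+ε-1/q) * ((1+(m:ℝ))/(1+(n:ℝ)))^(a+ε*(1+2/q)+1/q)
        ≤ 2 ^ (-(2*a)+ε-1/q) * 1 := mul_le_mul_of_nonneg_left h1 (by positivity)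
      _ = 2 ^ (-(2*a)+ε-1/q) := mul_one _
      _ ≤ max 1 (2 ^ (-(2*a)+ε-1/q)) := le_max_right _ _
end
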